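/- arXiv:1803.08336 — 2 statements merged into one kernel-verified Lean document; each statement's English description precedes it below -/
import Mathlib

section
/- Let c₁, c₂, γ, κ, M be real numbers with κ > 0, γ > 0, M > 0, and 4γ²c₁ < c₂ < 0. Define G(y) = κ·((c₁y² − 2c₂)(y − 2γ) − 2c₂γ)/(My) − γ²κ·K for y ∈ (0, 2γ), where K is any real constant. Then G''(y) = (2κ/(My³))(c₁y³ + 2c₂γ) < 0 for all y ∈ (0, 2γ), G'(γ) > 0, and G'(2γ) < 0; hence G has a unique critical point ŷ ∈ (γ, 2γ), which is the unique maximizer of G on (0, 2γ). -/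
/-!
Away from `0`, `G` is a quadratic plus a multiple of `1 / y`, so
`G'' y = 2κ / (M y³) · (c₁ y³ + 2 c₂ γ)`, which is negative for every `y > 0` because
`c₁ < c₂ / (4γ²) < 0`. Hence `G` is strictly concave on `(0, ∞)` and `G'` is strictly decreasing
there. Since `G' γ > 0 > G' (2γ)`, Darboux's theorem gives a zero of `G'` in `(γ, 2γ)`, unique by
monotonicity, and a critical point of a strictly concave function is its strict maximum.
-/

open Set

theorem StrictConcaveOn.lt_of_hasDerivAt_zero {S : Set ℝ} {f : ℝ → ℝ} {x y : ℝ}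
    (hf : StrictConcaveOn ℝ S f) (hx : x ∈ S) (hy : y ∈ S) (hyx : y ≠ x)
    (hfx : HasDerivAt f 0 x) : f y < f x := by
  rcases hyx.lt_or_gt with hlt | hgt
  · have := hf.lt_slope_of_hasDerivAt hy hx hlt hfx
    rw [slope_def_field, lt_div_iff₀ (sub_pos.2 hlt), zero_mul] at this
    linarith
  · have := hf.slope_lt_of_hasDerivAt hx hy hgt hfx
    rw [slope_def_field, div_lt_iff₀ (sub_pos.2 hgt), zero_mul] at this
    linarith

theorem existsUnique_deriv_eq_zero_of_strictAntiOn {f : ℝ → ℝ} {a b : ℝ} (hab : a ≤ b)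
    (hd : ∀ x ∈ Icc a b, DifferentiableAt ℝ f x) (hf' : StrictAntiOn (deriv f) (Icc a b))
    (ha : 0 < deriv f a) (hb : deriv f b < 0) :
    ∃! c, c ∈ Ioo a b ∧ deriv f c = 0 := by
  obtain ⟨c, hc, hc0⟩ := exists_hasDerivWithinAt_eq_of_lt_of_gt hab
    (fun x hx => (hd x hx).hasDerivAt.hasDerivWithinAt) ha hb
  refine ⟨c, ⟨hc, hc0⟩, fun c' ⟨hc', hc'0⟩ => ?_⟩
  exact hf'.injOn (Ioo_subset_Icc_self hc') (Ioo_subset_Icc_self hc) (hc'0.trans hc0.symm)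

noncomputable def welfare (c₁ c₂ γ κ M K y : ℝ) : ℝ :=
  κ * ((c₁ * y ^ 2 - 2 * c₂) * (y - 2 * γ) - 2 * c₂ * γ) / (M * y) - γ ^ 2 * κ * K

noncomputable def welfareDeriv (c₁ c₂ γ κ M y : ℝ) : ℝ :=
  2 * κ / M * (c₁ * y - c₁ * γ - c₂ * γ / y ^ 2)

section
variable {c₁ c₂ γ κ M : ℝ}

theorem hasDerivAt_welfare (K : ℝ) (hM : M ≠ 0) {y : ℝ} (hy : y ≠ 0) :
    HasDerivAt (welfare c₁ c₂ γ κ M K) (welfareDeriv c₁ c₂ γ κ M y) y := by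
  have hnum := ((((hasDerivAt_pow 2 y).const_mul c₁).sub_const (2 * c₂)).mul
    ((hasDerivAt_id' y).sub_const (2 * γ))).sub_const (2 * c₂ * γ) |>.const_mul κ
  refine ((hnum.div ((hasDerivAt_id' y).const_mul M) (mul_ne_zero hM hy)).sub_const
    (γ ^ 2 * κ * K)).congr_deriv ?_
  simp only [welfareDeriv, Pi.mul_apply]
  field_simp
  ring

theorem deriv_welfare (K : ℝ) (hM : M ≠ 0) {y : ℝ} (hy : y ≠ 0) :
    deriv (welfare c₁ c₂ γ κ M K) y = welfareDeriv c₁ c₂ γ κ M y :=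
  (hasDerivAt_welfare K hM hy).deriv

theorem hasDerivAt_welfareDeriv (hM : M ≠ 0) {y : ℝ} (hy : y ≠ 0) :
    HasDerivAt (welfareDeriv c₁ c₂ γ κ M)
      (2 * κ / (M * y ^ 3) * (c₁ * y ^ 3 + 2 * c₂ * γ)) y := by
  have hquot := (hasDerivAt_const y (c₂ * γ)).div (hasDerivAt_pow 2 y) (pow_ne_zero 2 hy)
  refine ((((hasDerivAt_id' y).const_mul c₁).sub_const (c₁ * γ)).sub hquot |>.const_mul
    (2 * κ / M)).congr_deriv ?_
  field_simp
  ring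

theorem deriv_deriv_welfare (K : ℝ) (hM : M ≠ 0) {y : ℝ} (hy : y ≠ 0) :
    deriv (deriv (welfare c₁ c₂ γ κ M K)) y = 2 * κ / (M * y ^ 3) * (c₁ * y ^ 3 + 2 * c₂ * γ) := by
  have : deriv (welfare c₁ c₂ γ κ M K) =ᶠ[nhds y] welfareDeriv c₁ c₂ γ κ M :=
    eventually_ne_nhds hy |>.mono fun z hz => deriv_welfare K hM hz
  rw [this.deriv_eq, (hasDerivAt_welfareDeriv hM hy).deriv]

theorem welfareDeriv_gamma_pos (hκ : 0 < κ) (hγ : 0 < γ) (hM : 0 < M) (hc₂ : c₂ < 0) :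
    0 < welfareDeriv c₁ c₂ γ κ M γ := by
  have : welfareDeriv c₁ c₂ γ κ M γ = 2 * κ / M * (-c₂ / γ) := by
    unfold welfareDeriv
    field_simp
    ring
  rw [this]
  exact mul_pos (by positivity) (div_pos (by linarith) hγ)

theorem welfareDeriv_two_mul_gamma_neg (hκ : 0 < κ) (hγ : 0 < γ) (hM : 0 < M)
    (hc : 4 * γ ^ 2 * c₁ < c₂) : welfareDeriv c₁ c₂ γ κ M (2 * γ) < 0 := by
  have : welfareDeriv c₁ c₂ γ κ M (2 * γ) = 2 * κ / M * ((4 * γ ^ 2 * c₁ - c₂) / (4 * γ)) := by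
    unfold welfareDeriv
    field_simp
    ring
  rw [this]
  exact mul_neg_of_pos_of_neg (by positivity) (div_neg_of_neg_of_pos (by linarith) (by positivity))

end

/-- Key calculus step of the welfare-maximization theorem: strict concavity of `G`
on `(0, 2γ)`, sign of `G'` at the endpoints `γ` and `2γ`, and existence of a unique
critical point `ŷ ∈ (γ, 2γ)` which uniquely maximizes `G` on `(0, 2γ)`. -/
theorem stmt_7 (c₁ c₂ γ κ M K : ℝ)
    (hκ : 0 < κ) (hγ : 0 < γ) (hM : 0 < M)
    (hc : 4 * γ ^ 2 * c₁ < c₂) (hc₂ : c₂ < 0)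
    (G : ℝ → ℝ)
    (hG : ∀ y, G y = κ * ((c₁ * y ^ 2 - 2 * c₂) * (y - 2 * γ) - 2 * c₂ * γ) / (M * y)
      - γ ^ 2 * κ * K) :
    (∀ y ∈ Set.Ioo (0:ℝ) (2 * γ),
        deriv (deriv G) y = 2 * κ / (M * y ^ 3) * (c₁ * y ^ 3 + 2 * c₂ * γ) ∧
        deriv (deriv G) y < 0) ∧
    0 < deriv G γ ∧
    deriv G (2 * γ) < 0 ∧
    (∃! yhat : ℝ, yhat ∈ Set.Ioo γ (2 * γ) ∧ deriv G yhat = 0 ∧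
        ∀ y ∈ Set.Ioo (0:ℝ) (2 * γ), y ≠ yhat → G y < G yhat) := by
  obtain rfl : G = welfare c₁ c₂ γ κ M K := funext hG
  have hc₁ : c₁ < 0 := by nlinarith
  have hG'' : ∀ y, 0 < y →
      deriv (deriv (welfare c₁ c₂ γ κ M K)) y = 2 * κ / (M * y ^ 3) * (c₁ * y ^ 3 + 2 * c₂ * γ) ∧
      deriv (deriv (welfare c₁ c₂ γ κ M K)) y < 0 := by
    intro y hy
    rw [deriv_deriv_welfare K hM.ne' hy.ne']
    exact ⟨rfl, mul_neg_of_pos_of_neg (by positivity) (by nlinarith [pow_pos hy 3])⟩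
  have hd : ∀ y ∈ Ioi (0 : ℝ), DifferentiableAt ℝ (welfare c₁ c₂ γ κ M K) y :=
    fun y hy => (hasDerivAt_welfare K hM.ne' (ne_of_gt hy)).differentiableAt
  have hconc : StrictConcaveOn ℝ (Ioi 0) (welfare c₁ c₂ γ κ M K) :=
    strictConcaveOn_of_deriv2_neg' (convex_Ioi _)
      (fun y hy => (hd y hy).continuousAt.continuousWithinAt) fun y hy => (hG'' y hy).2
  have hG'_pos : 0 < deriv (welfare c₁ c₂ γ κ M K) γ := by
    rw [deriv_welfare K hM.ne' hγ.ne']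
    exact welfareDeriv_gamma_pos hκ hγ hM hc₂
  have hG'_neg : deriv (welfare c₁ c₂ γ κ M K) (2 * γ) < 0 := by
    rw [deriv_welfare K hM.ne' (by positivity)]
    exact welfareDeriv_two_mul_gamma_neg hκ hγ hM hc
  have hIcc : Icc γ (2 * γ) ⊆ Ioi 0 := fun y hy => hγ.trans_le hy.1
  obtain ⟨yhat, ⟨hyhat, hyhat0⟩, huniq⟩ := existsUnique_deriv_eq_zero_of_strictAntiOn
    (by linarith) (fun y hy => hd y (hIcc hy)) ((hconc.strictAntiOn_deriv hd).mono hIcc)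
    hG'_pos hG'_neg
  refine ⟨fun y hy => hG'' y hy.1, hG'_pos, hG'_neg, yhat, ⟨hyhat, hyhat0, ?_⟩,
    fun y hy => huniq y ⟨hy.1, hy.2.1⟩⟩
  have hmax : HasDerivAt (welfare c₁ c₂ γ κ M K) 0 yhat :=
    hyhat0 ▸ (hd yhat (hIcc (Ioo_subset_Icc_self hyhat))).hasDerivAt
  exact fun y hy hne => hconc.lt_of_hasDerivAt_zero (hIcc (Ioo_subset_Icc_self hyhat)) hy.1 hne hmax
end

section
/- Let κ(t) > 0, γ(t) ∈ ℝ, and let μ₁(t) < κ(t). Define f-difference = −μ₁(t)·(t²α² + t(w₀α + η²))/M and h-difference = (μ₁(t)²γ(t)²κ(t)/(2κ(t) − μ₁(t))²)·(Σᵢ E[ãᵢ²] − E[ã_Σ²]/M). If α·w₀ ≥ 0, η ≥ 0, t > 0, α ≠ 0 or η ≠ 0, and Σᵢ E[ãᵢ²] − E[ã_Σ²]/M > 0, then the function μ ↦ −μ(t²α² + t(w₀α + η²))/M − (μ²γ(t)²κ(t)/(2κ(t) − μ)²)(Σᵢ E[ãᵢ²] − E[ã_Σ²]/M) on (−∞,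 κ(t)) has supremum attained nowhere (the supremum over μ → −∞ direction is +∞ or approached but not attained); in particular, if t²α² + t(w₀α + η²) > 0, the objective tends to +∞ as μ → −∞ and no maximizer exists. -/
/-!
Since `αw₀ ≥ 0` and `α`, `η` are not both zero, the coefficient of `-μ` in `W` is positive,
so the linear part tends to `+∞` as `μ → −∞`. The penalty stays bounded there, because
`μ² / (2κ − μ)² → 1`. A function tending to `+∞` at `−∞` has no maximiser on `(−∞, κ)`.
-/

open Filter Topology

lemma tendsto_div_const_sub_atBot (a : ℝ) :
    Tendsto (fun x => x / (a - x)) atBot (𝓝 (-1)) := by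
  have hden : Tendsto (fun x : ℝ => a - x) atBot atTop :=
    tendsto_atTop_add_const_left _ a tendsto_neg_atBot_atTop
  have hlim : Tendsto (fun x : ℝ => -1 + a / (a - x)) atBot (𝓝 (-1)) := by
    simpa using (tendsto_const_nhds (x := a)).div_atTop hden |>.const_add (-1)
  refine hlim.congr' ?_
  filter_upwards [eventually_lt_atBot a] with x hx
  have : a - x ≠ 0 := by linarith
  field_simp
  ring

lemma tendsto_sq_div_sq_const_sub_atBot (a : ℝ) :
    Tendsto (fun x => x ^ 2 / (a - x) ^ 2) atBot (𝓝 1) := by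
  simpa [div_pow] using (tendsto_div_const_sub_atBot a).pow 2

lemma not_exists_forall_le_of_tendsto_atBot_atTop {α β : Type*} [LinearOrder α] [NoMinOrder α]
    [Preorder β] [NoMaxOrder β] {f : α → β} (hf : Tendsto f atBot atTop) (b : α) :
    ¬ ∃ x, x < b ∧ ∀ y, y < b → f y ≤ f x := by
  have : Nonempty α := ⟨b⟩
  rintro ⟨x, -, hmax⟩
  obtain ⟨y, hfy, hyb⟩ :=
    ((hf.eventually (eventually_gt_atTop (f x))).and (eventually_lt_atBot b)).exists
  exact (hmax y hyb).not_gt hfy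

lemma welfare_slope_pos {α w₀ η t : ℝ} (hαw : 0 ≤ α * w₀) (ht : 0 < t)
    (hne : α ≠ 0 ∨ η ≠ 0) : 0 < t ^ 2 * α ^ 2 + t * (w₀ * α + η ^ 2) := by
  have hcross : 0 ≤ t * (w₀ * α) := mul_nonneg ht.le (by linarith [mul_comm α w₀])
  rcases hne with hα | hη
  · have : 0 < t ^ 2 * α ^ 2 := by positivity
    nlinarith [mul_nonneg ht.le (sq_nonneg η)]
  · have : 0 < t * η ^ 2 := by positivity
    nlinarith [sq_nonneg (t * α)]

theorem stmt_9_general (α w₀ η t κt γt M D : ℝ)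
    (hM : 0 < M) (hαw : 0 ≤ α * w₀)
    (ht : 0 < t) (hne : α ≠ 0 ∨ η ≠ 0)
    (W : ℝ → ℝ)
    (hW : ∀ μ, W μ = -μ * (t ^ 2 * α ^ 2 + t * (w₀ * α + η ^ 2)) / M
        - μ ^ 2 * γt ^ 2 * κt / (2 * κt - μ) ^ 2 * D) :
    Filter.Tendsto W Filter.atBot Filter.atTop ∧
    ¬ ∃ μ : ℝ, μ < κt ∧ ∀ μ' : ℝ, μ' < κt → W μ' ≤ W μ := by
  set c := t ^ 2 * α ^ 2 + t * (w₀ * α + η ^ 2)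
  have hlinear : Tendsto (fun μ : ℝ => -μ * c / M) atBot atTop := by
    refine (tendsto_neg_atBot_atTop.atTop_mul_const
      (div_pos (welfare_slope_pos hαw ht hne) hM)).congr fun μ => ?_
    ring
  have hpenalty : Tendsto (fun μ : ℝ => -(μ ^ 2 * γt ^ 2 * κt / (2 * κt - μ) ^ 2 * D))
      atBot (𝓝 (-(γt ^ 2 * κt * D))) := by
    refine (((tendsto_sq_div_sq_const_sub_atBot (2 * κt)).mul_const (γt ^ 2 * κt * D)).congr
      fun μ => ?_).neg.trans_eq (by rw [one_mul])
    rw [div_mul_eq_mul_div, div_mul_eq_mul_div]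
    ring
  have hWtend : Tendsto W atBot atTop := by
    simpa only [funext hW, sub_eq_add_neg] using hlinear.atTop_add hpenalty
  exact ⟨hWtend, not_exists_forall_le_of_tendsto_atBot_atTop hWtend κt⟩

/-- Theorem 2(ii): when `αw₀ ≥ 0` (and the objective's linear coefficient is nonzero),
the per-time welfare objective tends to `+∞` as `μ → −∞` on `(−∞, κ(t))`, so no
welfare maximizer exists. Here `D = Σᵢ E[ãᵢ²] − E[ã_Σ²]/M > 0`. -/
theorem stmt_9 (α w₀ η t κt γt M D : ℝ)
    (hκ : 0 < κt) (hM : 0 < M) (hαw : 0 ≤ α * w₀) (hη : 0 ≤ η)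
    (ht : 0 < t) (hne : α ≠ 0 ∨ η ≠ 0) (hD : 0 < D)
    (W : ℝ → ℝ)
    (hW : ∀ μ, W μ = -μ * (t ^ 2 * α ^ 2 + t * (w₀ * α + η ^ 2)) / M
        - μ ^ 2 * γt ^ 2 * κt / (2 * κt - μ) ^ 2 * D) :
    Filter.Tendsto W Filter.atBot Filter.atTop ∧
    ¬ ∃ μ : ℝ, μ < κt ∧ ∀ μ' : ℝ, μ' < κt → W μ' ≤ W μ :=
  stmt_9_general α w₀ η t κt γt M D hM hαw ht hne W hW
end
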